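/- arXiv:2301.07361 — 2 statements merged into one kernel-verified Lean document; each statement's English description precedes it below -/
import Mathlib

section
/- Let H be a real inner product space and b symmetric bilinear with č‖v‖² ≤ b(v,v) for č > 0. Suppose û minimizes F(v) = (1/2) b(v,v) − b(u, v) + (β/2) q(v) + m(v) over H, where q is a nonnegative quadratic form, m is linear, and the 'completed square' identity F(v) = (1/2) b(v − u, v − u) + (β/2) q̃(v) + const holds for some nonnegative q̃. If additionally there is φ ∈ H with q̃(cβ⁻¹φ + u) = 0 and b(cβ⁻¹φ, cβ⁻¹φ) ≤ ĉ c²β⁻²‖φ‖², then ‖û − u‖ ≤ (c/β)√(ĉ/č)‖φ‖. -/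
/-- Abstract Neumann penalty error estimate (Step 2 of Theorem 3.4): if the
minimizer `uhat` of `F` satisfies the completed-square identity
`F v = (1/2) b (v-u) (v-u) + (β/2) qtil v + K` with `qtil ≥ 0`, and `φ` satisfies
`qtil ((c/β) φ + u) = 0` and `b ((c/β) φ) ((c/β) φ) ≤ cmax c² β⁻² ‖φ‖²`, then
`‖uhat - u‖ ≤ (c/β) √(cmax/cmin) ‖φ‖` with `cmax = max c 1`, `cmin = min c 1`. -/
theorem stmt_15 {H : Type*} [NormedAddCommGroup H] [InnerProductSpace ℝ H]
    (b : H →ₗ[ℝ] H →ₗ[ℝ] ℝ)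
    (hsymm : ∀ u v : H, b u v = b v u)
    (c β : ℝ) (hc : 0 < c) (hβ : 0 < β)
    (hcoer : ∀ v : H, min c 1 * ‖v‖ ^ 2 ≤ b v v)
    (F : H → ℝ) (qtil : H → ℝ) (hqtil : ∀ v, 0 ≤ qtil v) (K : ℝ)
    (u uhat φ : H)
    (hid : ∀ v : H,
      F v = ((1 : ℝ) / 2) * b (v - u) (v - u) + (β / 2) * qtil v + K)
    (hmin : ∀ v : H, F uhat ≤ F v)
    (hφq : qtil ((c * β⁻¹) • φ + u) = 0)
    (hφb : b ((c * β⁻¹) • φ) ((c * β⁻¹) • φ)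
      ≤ max c 1 * c ^ 2 * β⁻¹ ^ 2 * ‖φ‖ ^ 2) :
    ‖uhat - u‖ ≤ (c / β) * Real.sqrt (max c 1 / min c 1) * ‖φ‖ := by
  have hcmin : 0 < min c 1 := lt_min hc one_pos
  have hcmax : 0 < max c 1 := lt_of_lt_of_le one_pos (le_max_right _ _)
  -- compare F uhat with F at the test vector
  have h1 := hmin ((c * β⁻¹) • φ + u)
  rw [hid, hid, hφq] at h1
  have hsimp : (c * β⁻¹) • φ + u - u = (c * β⁻¹) • φ := by abel
  rw [hsimp] at h1
  have hq := mul_nonneg (by positivity : (0:ℝ) ≤ β / 2) (hqtil uhat)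
  have hb : b (uhat - u) (uhat - u) ≤ b ((c * β⁻¹) • φ) ((c * β⁻¹) • φ) := by
    nlinarith
  have key : min c 1 * ‖uhat - u‖ ^ 2 ≤ max c 1 * c ^ 2 * β⁻¹ ^ 2 * ‖φ‖ ^ 2 :=
    le_trans (hcoer _) (le_trans hb hφb)
  have hR : (0:ℝ) ≤ (c / β) * Real.sqrt (max c 1 / min c 1) * ‖φ‖ := by positivity
  have hsq : ‖uhat - u‖ ^ 2 ≤ ((c / β) * Real.sqrt (max c 1 / min c 1) * ‖φ‖) ^ 2 := by
    have hs : Real.sqrt (max c 1 / min c 1) ^ 2 = max c 1 / min c 1 :=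
      Real.sq_sqrt (by positivity)
    have : ‖uhat - u‖ ^ 2 ≤ max c 1 / min c 1 * c ^ 2 * β⁻¹ ^ 2 * ‖φ‖ ^ 2 := by
      rw [div_mul_eq_mul_div, div_mul_eq_mul_div, div_mul_eq_mul_div, le_div_iff₀ hcmin]
      nlinarith
    calc ‖uhat - u‖ ^ 2 ≤ max c 1 / min c 1 * c ^ 2 * β⁻¹ ^ 2 * ‖φ‖ ^ 2 := this
      _ = ((c / β) * Real.sqrt (max c 1 / min c 1) * ‖φ‖) ^ 2 := by
          rw [mul_pow, mul_pow, hs, div_pow, div_eq_mul_inv]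
          ring
  exact (pow_le_pow_iff_left₀ (norm_nonneg _) hR two_ne_zero).mp hsq
end

section
/- Let a, q : H → ℝ with a(v) = (1/2) b(v,v) for a coercive symmetric bilinear form b (coercivity constant č) and q a nonnegative function. For β > 0 let û_β minimize L_β(v) = a(v − u) + β q(v). Suppose for every β there is v̄_β with a(v̄_β − u) ≤ C₁ β⁻² and q(v̄_β) ≤ C₂ β⁻². Then ‖û_β − u‖² ≤ (2/č)(C₁ β⁻² + C₂ β⁻¹), so û_β → u with ‖û_β − u‖ = O(β^{-1/2}) in general, and O(β⁻¹) when C₂ = 0. -/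
open Filter

/-- General penalty-method convergence-rate lemma: if `uhat β` minimizes
`L_β v = (1/2) b (v - u) (v - u) + β q v` with `b` coercive (constant `cmin`) and
`q ≥ 0`, and for every `β > 0` there is `vbar` with
`(1/2) b (vbar - u) (vbar - u) ≤ C₁ β⁻²` and `q vbar ≤ C₂ β⁻²`, then
`‖uhat β - u‖² ≤ (2/cmin)(C₁ β⁻² + C₂ β⁻¹)` for all `β > 0`, so `uhat β → u`. -/
theorem stmt_19 {H : Type*} [NormedAddCommGroup H] [InnerProductSpace ℝ H]
    (b : H →ₗ[ℝ] H →ₗ[ℝ] ℝ)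
    (hsymm : ∀ u v : H, b u v = b v u)
    (cmin : ℝ) (hcmin : 0 < cmin)
    (hcoer : ∀ v : H, cmin * ‖v‖ ^ 2 ≤ b v v)
    (q : H → ℝ) (hq : ∀ v, 0 ≤ q v)
    (C₁ C₂ : ℝ) (hC₁ : 0 ≤ C₁) (hC₂ : 0 ≤ C₂)
    (u : H) (uhat : ℝ → H)
    (hmin : ∀ β : ℝ, 0 < β → ∀ v : H,
      ((1 : ℝ) / 2) * b (uhat β - u) (uhat β - u) + β * q (uhat β)
        ≤ ((1 : ℝ) / 2) * b (v - u) (v - u) + β * q v)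
    (hcomp : ∀ β : ℝ, 0 < β → ∃ vbar : H,
      ((1 : ℝ) / 2) * b (vbar - u) (vbar - u) ≤ C₁ * β⁻¹ ^ 2
      ∧ q vbar ≤ C₂ * β⁻¹ ^ 2) :
    (∀ β : ℝ, 0 < β →
      ‖uhat β - u‖ ^ 2 ≤ (2 / cmin) * (C₁ * β⁻¹ ^ 2 + C₂ * β⁻¹))
    ∧ Tendsto uhat atTop (nhds u) := by
  have key : ∀ β : ℝ, 0 < β →
      ‖uhat β - u‖ ^ 2 ≤ (2 / cmin) * (C₁ * β⁻¹ ^ 2 + C₂ * β⁻¹) := by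
    intro β hβ
    obtain ⟨vbar, hv1, hv2⟩ := hcomp β hβ
    have h1 : ((1 : ℝ) / 2) * b (uhat β - u) (uhat β - u)
        ≤ C₁ * β⁻¹ ^ 2 + C₂ * β⁻¹ := by
      have h := hmin β hβ vbar
      have hqu : 0 ≤ β * q (uhat β) := mul_nonneg hβ.le (hq _)
      have hqv : β * q vbar ≤ β * (C₂ * β⁻¹ ^ 2) :=
        mul_le_mul_of_nonneg_left hv2 hβ.le
      have hb : β * (C₂ * β⁻¹ ^ 2) = C₂ * β⁻¹ := by
        field_simp
      nlinarith [hv1]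
    have h2 : cmin * ‖uhat β - u‖ ^ 2 ≤ 2 * (C₁ * β⁻¹ ^ 2 + C₂ * β⁻¹) := by
      have := hcoer (uhat β - u)
      nlinarith
    rw [div_mul_eq_mul_div, le_div_iff₀ hcmin]
    nlinarith
  refine ⟨key, ?_⟩
  rw [tendsto_iff_norm_sub_tendsto_zero]
  have hbound : Tendsto (fun β : ℝ => Real.sqrt ((2 / cmin) * (C₁ * β⁻¹ ^ 2 + C₂ * β⁻¹)))
      atTop (nhds 0) := by
    have h0 : Tendsto (fun β : ℝ => (2 / cmin) * (C₁ * β⁻¹ ^ 2 + C₂ * β⁻¹))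
        atTop (nhds ((2 / cmin) * (C₁ * 0 ^ 2 + C₂ * 0))) := by
      exact (tendsto_const_nhds.mul (((tendsto_inv_atTop_zero.pow 2).const_mul C₁).add
        (tendsto_inv_atTop_zero.const_mul C₂)))
    simpa [Function.comp_def] using (Real.continuous_sqrt.tendsto _).comp h0
  apply squeeze_zero' (Eventually.of_forall fun β => norm_nonneg _) _ hbound
  filter_upwards [eventually_gt_atTop (0 : ℝ)] with β hβ
  calc ‖uhat β - u‖ = Real.sqrt (‖uhat β - u‖ ^ 2) := (Real.sqrt_sq (norm_nonneg _)).symm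
    _ ≤ Real.sqrt ((2 / cmin) * (C₁ * β⁻¹ ^ 2 + C₂ * β⁻¹)) := Real.sqrt_le_sqrt (key β hβ)
end
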